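/- With A, g, h as above and n ≥ 1, suppose g·A·h⁻¹ equals the matrix N with 1's on the diagonal, −1's on the subdiagonal (positions (i,i−1) for 1 ≤ i ≤ n), and zeros elsewhere, and suppose all f_i ≠ 0. Then a = b₀, b_i = b₀/f_i and a_{ii} = b₀/f_i for 1 ≤ i ≤ n, a_{i,i−1} = −b₀/f_{i−1} for 2 ≤ i ≤ n, and all other a_{ij} (j ∉ {i−1, i}) vanish. -/

import Mathlib

/-!
Compare the entries of `g A = N h`. The `(0,0)` entry gives `a = b₀`, and the lower right
block gives `a_{pq} = N_{pq} b_q`. The first column then says that `c_p := b_p f_p` satisfies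
`c_1 = b₀` and `c_p - c_{p-1} = 0` for `p ≥ 2`, so every `c_p` equals `b₀`.
-/

open Matrix Finset

/-- The matrix `A` with 1's on the diagonal, first column `(1, -f₁, …, -f_n)ᵀ`
and zeros elsewhere. -/
def Amat {n : ℕ} (fv : Fin n → ℝ) : Matrix (Fin (n + 1)) (Fin (n + 1)) ℝ :=
  Matrix.of fun i j =>
    (if i = j then (1 : ℝ) else 0) +
      (if j = 0 then Fin.cases 0 (fun k => -fv k) i else 0)

/-- The block-diagonal matrix `g = diag(a, (aM i j))`. -/
def gmat {n : ℕ} (a : ℝ) (aM : Matrix (Fin n) (Fin n) ℝ) :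
    Matrix (Fin (n + 1)) (Fin (n + 1)) ℝ :=
  Matrix.of fun i j =>
    Fin.cases (Fin.cases a (fun _ => 0) j) (fun k => Fin.cases 0 (fun l => aM k l) j) i

/-- The matrix `N` with 1's on the diagonal, `-1`'s on the subdiagonal, zeros elsewhere. -/
def Nmat (n : ℕ) : Matrix (Fin (n + 1)) (Fin (n + 1)) ℝ :=
  Matrix.of fun i j =>
    if i = j then (1 : ℝ) else if (i : ℕ) = (j : ℕ) + 1 then -1 else 0

section

variable {n : ℕ} (a : ℝ) (aM : Matrix (Fin n) (Fin n) ℝ) (fv : Fin n → ℝ)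

@[simp] lemma gmat_mul_Amat_zero_zero : (gmat a aM * Amat fv) 0 0 = a := by
  simp [mul_apply, Fin.sum_univ_succ, gmat, Amat]

@[simp] lemma gmat_mul_Amat_succ_zero (p : Fin n) :
    (gmat a aM * Amat fv) p.succ 0 = -∑ r, aM p r * fv r := by
  simp [mul_apply, Fin.sum_univ_succ, gmat, Amat]

@[simp] lemma gmat_mul_Amat_succ_succ (p q : Fin n) :
    (gmat a aM * Amat fv) p.succ q.succ = aM p q := by
  simp [mul_apply, gmat, Amat, Fin.succ_ne_zero]

@[simp] lemma Nmat_zero_zero : Nmat n 0 0 = 1 := by simp [Nmat]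

@[simp] lemma Nmat_succ_zero (p : Fin n) : Nmat n p.succ 0 = if (p : ℕ) = 0 then -1 else 0 := by
  simp [Nmat, Fin.succ_ne_zero]

@[simp] lemma Nmat_succ_succ (p q : Fin n) :
    Nmat n p.succ q.succ = if p = q then 1 else if (p : ℕ) = q + 1 then -1 else 0 := by
  simp [Nmat, Fin.succ_inj]

lemma sum_Nmat_succ_succ_mul_of_val_eq_zero (c : Fin n → ℝ) {p : Fin n} (hp : (p : ℕ) = 0) :
    ∑ r, Nmat n p.succ r.succ * c r = c p := by
  rw [Finset.sum_eq_single p]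
  · simp
  · intro r _ hr
    simp [Ne.symm hr, hp]
  · simp

lemma sum_Nmat_succ_succ_mul_of_val_eq_succ (c : Fin n → ℝ) {p q : Fin n}
    (hpq : (p : ℕ) = q + 1) : ∑ r, Nmat n p.succ r.succ * c r = c p - c q := by
  have hne : p ≠ q := fun h => by simp [h] at hpq
  rw [Finset.sum_eq_add_of_mem p q (mem_univ _) (mem_univ _) hne]
  · simp [hne, hpq, sub_eq_add_neg]
  · rintro r - ⟨hrp, hrq⟩
    have : (p : ℕ) ≠ r + 1 := fun h => hrq (Fin.ext (by omega))
    simp [Ne.symm hrp, this]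

lemma eq_of_val_eq_zero_of_val_eq_succ {α : Type*} {c : Fin n → α} {x : α}
    (h₀ : ∀ p : Fin n, (p : ℕ) = 0 → c p = x)
    (hsucc : ∀ p q : Fin n, (p : ℕ) = q + 1 → c p = c q) (p : Fin n) : c p = x := by
  obtain ⟨m, hm⟩ := p
  induction m with
  | zero => exact h₀ _ rfl
  | succ k ih => exact (hsucc ⟨k + 1, hm⟩ ⟨k, by omega⟩ rfl).trans (ih _)

end

-- `aM p q` is the paper's `a_{p+1,q+1}` and `fv p` is the paper's `f_{p+1}`.
theorem stmt6_general {n : ℕ} (fv : Fin n → ℝ) (hfv : ∀ i, fv i ≠ 0)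
    (a : ℝ)
    (aM : Matrix (Fin n) (Fin n) ℝ)
    (b : Fin (n + 1) → ℝ) (hb : ∀ i, b i ≠ 0)
    (hN : gmat a aM * Amat fv * (Matrix.diagonal b)⁻¹ = Nmat n) :
    a = b 0 ∧
    (∀ i : Fin n, b i.succ = b 0 / fv i) ∧
    (∀ i : Fin n, aM i i = b 0 / fv i) ∧
    (∀ i j : Fin n, (i : ℕ) = (j : ℕ) + 1 → aM i j = -b 0 / fv j) ∧
    (∀ i j : Fin n, i ≠ j → (i : ℕ) ≠ (j : ℕ) + 1 → aM i j = 0) := by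
  have hdet : IsUnit (diagonal b).det := by
    simpa [det_diagonal, isUnit_iff_ne_zero, prod_ne_zero_iff] using hb
  have hgA : gmat a aM * Amat fv = Nmat n * diagonal b := by
    rw [← hN, nonsing_inv_mul_cancel_right _ _ hdet]
  have hentry : ∀ i j, (gmat a aM * Amat fv) i j = Nmat n i j * b j := fun i j => by
    rw [hgA, mul_diagonal]
  have haM : ∀ p q : Fin n, aM p q = Nmat n p.succ q.succ * b q.succ := fun p q => by
    simpa using hentry p.succ q.succ
  have hrow : ∀ p : Fin n,
      ∑ r, Nmat n p.succ r.succ * (b r.succ * fv r) = if (p : ℕ) = 0 then b 0 else 0 := by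
    intro p
    have h := hentry p.succ 0
    simp only [gmat_mul_Amat_succ_zero, Nmat_succ_zero, haM, mul_assoc] at h
    split_ifs at h ⊢ <;> linarith
  have hbf : ∀ p : Fin n, b p.succ * fv p = b 0 := by
    refine eq_of_val_eq_zero_of_val_eq_succ (fun p hp => ?_) (fun p q hpq => ?_)
    · have h := hrow p
      rwa [sum_Nmat_succ_succ_mul_of_val_eq_zero _ hp, if_pos hp] at h
    · have h := hrow p
      rwa [sum_Nmat_succ_succ_mul_of_val_eq_succ _ hpq, if_neg (by omega), sub_eq_zero] at h
  have hb' : ∀ i, b i.succ = b 0 / fv i := fun i => by rw [eq_div_iff (hfv i), hbf]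
  refine ⟨by simpa using hentry 0 0, hb', fun i => ?_, fun i j hij => ?_, fun i j hne hij => ?_⟩
  · simp [haM, hb']
  · have hne : i ≠ j := by rintro rfl; omega
    simp [haM, hb', hne, hij, neg_div]
  · simp [haM, hne, hij]

/-- Normalization of the zeroth-order invariants: if `g·A·h⁻¹ = N` then
`a = b₀`, `b_i = b₀/f_i = a_{ii}`, `a_{i,i-1} = -b₀/f_{i-1}` and all
other `a_{ij}` vanish.  (Here `aM p q` is the paper's `a_{p+1,q+1}` and
`fv p` is the paper's `f_{p+1}`.) -/
theorem stmt6 {n : ℕ} (hn : 1 ≤ n) (fv : Fin n → ℝ) (hfv : ∀ i, fv i ≠ 0)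
    (a : ℝ) (ha : a ≠ 0)
    (aM : Matrix (Fin n) (Fin n) ℝ) (haM : IsUnit aM)
    (b : Fin (n + 1) → ℝ) (hb : ∀ i, b i ≠ 0)
    (hN : gmat a aM * Amat fv * (Matrix.diagonal b)⁻¹ = Nmat n) :
    a = b 0 ∧
    (∀ i : Fin n, b i.succ = b 0 / fv i) ∧
    (∀ i : Fin n, aM i i = b 0 / fv i) ∧
    (∀ i j : Fin n, (i : ℕ) = (j : ℕ) + 1 → aM i j = -b 0 / fv j) ∧
    (∀ i j : Fin n, i ≠ j → (i : ℕ) ≠ (j : ℕ) + 1 → aM i j = 0) :=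
  stmt6_general fv hfv a aM b hb hN
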